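/- arXiv:math/0310082 — 4 statements merged into one kernel-verified Lean document; each statement's English description precedes it below -/
import Mathlib

section
/- For continuous real-valued functions f_1,...,f_n on [y,x] and any z with y ≤ z ≤ x, the iterated integral satisfies Chen's convolution formula: ∫_y^x α_1⋯α_n = Σ_{k=0}^n (∫_z^x α_1⋯α_k)(∫_y^z α_{k+1}⋯α_n), where α_j = f_j(t)dt. -/
open MeasureTheory intervalIntegral

/-- The iterated integral `∫_y^x α₁α₂⋯αₙ` of the 1-forms `αⱼ = fⱼ(t)dt`, defined
recursively by `∫_y^x α₁⋯αₙ = ∫_y^x f₁(t) (∫_y^t α₂⋯αₙ) dt`, with the empty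
iterated integral equal to `1`. -/
noncomputable def iterIntegral : List (ℝ → ℝ) → ℝ → ℝ → ℝ
  | [], _, _ => 1
  | f :: fs, y, x => ∫ t in y..x, f t * iterIntegral fs y t

lemma iterIntegral_continuousOn (y x : ℝ) (hyx : y ≤ x) :
    ∀ fs : List (ℝ → ℝ), (∀ f ∈ fs, ContinuousOn f (Set.Icc y x)) →
      ContinuousOn (fun t => iterIntegral fs y t) (Set.Icc y x)
  | [], _ => by simpa [iterIntegral] using continuousOn_const
  | f :: fs, hf => by
    have hfc : ContinuousOn f (Set.Icc y x) := hf f (by simp)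
    have hrec := iterIntegral_continuousOn y x hyx fs
      (fun g hg => hf g (by simp [hg]))
    have hint : IntegrableOn (fun t => f t * iterIntegral fs y t) (Set.uIcc y x) := by
      rw [Set.uIcc_of_le hyx]
      exact (hfc.mul hrec).integrableOn_compact isCompact_Icc
    have := continuousOn_primitive_interval (a := y) (b := x) hint
    rw [Set.uIcc_of_le hyx] at this
    simpa [iterIntegral] using this

/-- **Chen's convolution formula.**  For continuous `f₁,…,fₙ` on `[y,x]` and
`y ≤ z ≤ x`,
`∫_y^x α₁⋯αₙ = Σ_{k=0}^n (∫_z^x α₁⋯α_k) (∫_y^z α_{k+1}⋯αₙ)`. -/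
theorem iterIntegral_convolution (x y z : ℝ) (hyz : y ≤ z) (hzx : z ≤ x)
    (fs : List (ℝ → ℝ)) (hf : ∀ f ∈ fs, ContinuousOn f (Set.Icc y x)) :
    iterIntegral fs y x =
      ∑ k ∈ Finset.range (fs.length + 1),
        iterIntegral (fs.take k) z x * iterIntegral (fs.drop k) y z := by
  induction fs generalizing x with
  | nil => simp [iterIntegral]
  | cons f fs ih =>
    have hyx : y ≤ x := hyz.trans hzx
    have hfc : ContinuousOn f (Set.Icc y x) := hf f (by simp)
    have hfs : ∀ g ∈ fs, ContinuousOn g (Set.Icc y x) := fun g hg => hf g (by simp [hg])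
    have hcont : ContinuousOn (fun t => iterIntegral fs y t) (Set.Icc y x) :=
      iterIntegral_continuousOn y x hyx fs hfs
    -- integrability of the integrand on subintervals
    have hintYX : IntervalIntegrable (fun t => f t * iterIntegral fs y t) volume y x := by
      apply ContinuousOn.intervalIntegrable
      rw [Set.uIcc_of_le hyx]; exact hfc.mul hcont
    have hintYZ : IntervalIntegrable (fun t => f t * iterIntegral fs y t) volume y z :=
      hintYX.mono_set (by rw [Set.uIcc_of_le hyz, Set.uIcc_of_le hyx]
                          exact Set.Icc_subset_Icc le_rfl hzx)
    have hintZX : IntervalIntegrable (fun t => f t * iterIntegral fs y t) volume z x :=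
      hintYX.mono_set (by rw [Set.uIcc_of_le hzx, Set.uIcc_of_le hyx]
                          exact Set.Icc_subset_Icc hyz le_rfl)
    have hsplit : iterIntegral (f :: fs) y x =
        iterIntegral (f :: fs) y z + ∫ t in z..x, f t * iterIntegral fs y t := by
      rw [iterIntegral, iterIntegral, ← integral_add_adjacent_intervals hintYZ hintZX]
    rw [hsplit]
    -- the key computation on [z,x]
    have hcongr : (∫ t in z..x, f t * iterIntegral fs y t) =
        ∫ t in z..x, ∑ k ∈ Finset.range (fs.length + 1),
          f t * iterIntegral (fs.take k) z t * iterIntegral (fs.drop k) y z := by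
      apply integral_congr
      intro t ht
      rw [Set.uIcc_of_le hzx] at ht
      dsimp only
      have hyt : ∀ g ∈ fs, ContinuousOn g (Set.Icc y t) :=
        fun g hg => (hfs g hg).mono (Set.Icc_subset_Icc le_rfl ht.2)
      rw [ih t ht.1 hyt, Finset.mul_sum]
      simp [mul_assoc]
    rw [hcongr]
    have hintk : ∀ k ∈ Finset.range (fs.length + 1),
        IntervalIntegrable (fun t => f t * iterIntegral (fs.take k) z t *
          iterIntegral (fs.drop k) y z) volume z x := by
      intro k _
      apply ContinuousOn.intervalIntegrable
      rw [Set.uIcc_of_le hzx]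
      have h1 : ContinuousOn f (Set.Icc z x) := hfc.mono (Set.Icc_subset_Icc hyz le_rfl)
      have h2 : ContinuousOn (fun t => iterIntegral (fs.take k) z t) (Set.Icc z x) :=
        iterIntegral_continuousOn z x hzx (fs.take k)
          (fun g hg => (hfs g (List.mem_of_mem_take hg)).mono (Set.Icc_subset_Icc hyz le_rfl))
      exact (h1.mul h2).mul continuousOn_const
    rw [intervalIntegral.integral_finset_sum hintk]
    have hterm : ∀ k, (∫ t in z..x, f t * iterIntegral (fs.take k) z t *
          iterIntegral (fs.drop k) y z) =
        iterIntegral ((f :: fs).take (k + 1)) z x * iterIntegral ((f :: fs).drop (k + 1)) y z := by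
      intro k
      rw [List.take_succ_cons, List.drop_succ_cons]
      rw [show iterIntegral (f :: fs.take k) z x = ∫ t in z..x, f t * iterIntegral (fs.take k) z t
        from rfl, ← intervalIntegral.integral_mul_const]
    rw [Finset.sum_congr rfl (fun k _ => hterm k)]
    conv_rhs => rw [show (f :: fs).length + 1 = fs.length + 1 + 1 from rfl,
      Finset.sum_range_succ']
    rw [List.take_zero, List.drop_zero]
    rw [show iterIntegral ([] : List (ℝ → ℝ)) z x = 1 from rfl, one_mul, add_comm]
end

section
/- For continuous real-valued functions f_1,...,f_{n+m} on [y,x], the product of iterated integrals satisfies the shuffle formula (∫_y^x α_1⋯α_n)(∫_y^x α_{n+1}⋯α_{n+m}) = Σ_{σ∈Shuff(n,m)} ∫_y^x α_{σ(1)}α_{σ(2)}⋯α_{σ(n+m)}, where α_j = f_j(t)dt and Shuff(n,m) is the set of the binom(n+m,n) permutations σ of {1,...,n+m} satisfying σ^{-1}(j) < σ^{-1}(k) whenever 1 ≤ j < k ≤ n and whenever n+1 ≤ j < k ≤ n+m. -/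
open MeasureTheory intervalIntegral

/-- `Shuff n m`: the set of permutations `σ` of `{0,…,n+m-1}` such that
`σ⁻¹(i) < σ⁻¹(j)` whenever `i < j < n` and whenever `n ≤ i < j < n+m`
(the `(n,m)`-shuffles, in `0`-indexed form). -/
def Shuff (n m : ℕ) : Finset (Equiv.Perm (Fin (n + m))) :=
  Finset.univ.filter fun σ =>
    ∀ i j : Fin (n + m), i < j →
      ((j.val < n → σ⁻¹ i < σ⁻¹ j) ∧ (n ≤ i.val → σ⁻¹ i < σ⁻¹ j))

/-! ### Auxiliary material -/

section Aux

lemma succAbove_val_lt {K : ℕ} {a : Fin (K + 1)} {x : Fin K} (h : x.1 < a.1) :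
    (a.succAbove x).1 = x.1 := by
  rw [Fin.succAbove_of_castSucc_lt _ _ (by simpa [Fin.lt_def] using h)]
  rfl

lemma succAbove_val_ge {K : ℕ} {a : Fin (K + 1)} {x : Fin K} (h : a.1 ≤ x.1) :
    (a.succAbove x).1 = x.1 + 1 := by
  rw [Fin.succAbove_of_le_castSucc _ _ (by simpa [Fin.le_def] using h)]
  rfl

/-- Insert a new head value `a` into a permutation: `(extPerm a τ) 0 = a` and
`(extPerm a τ) (j+1) = a.succAbove (τ j)`. -/
def extPerm {K : ℕ} (a : Fin (K + 1)) (τ : Equiv.Perm (Fin K)) : Equiv.Perm (Fin (K + 1)) :=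
  ((finSuccEquiv K).trans ((Equiv.optionCongr τ).trans (finSuccEquiv' a).symm))

@[simp] lemma extPerm_zero {K : ℕ} (a : Fin (K + 1)) (τ : Equiv.Perm (Fin K)) :
    extPerm a τ 0 = a := by
  simp [extPerm]

@[simp] lemma extPerm_succ {K : ℕ} (a : Fin (K + 1)) (τ : Equiv.Perm (Fin K)) (j : Fin K) :
    extPerm a τ j.succ = a.succAbove (τ j) := by
  simp [extPerm]

lemma extPerm_injective {K : ℕ} (a : Fin (K + 1)) : Function.Injective (extPerm a) := by
  intro τ τ' h
  ext j
  have : extPerm a τ j.succ = extPerm a τ' j.succ := by rw [h]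
  rw [extPerm_succ, extPerm_succ] at this
  exact congrArg Fin.val (Fin.succAbove_right_injective this)

lemma extPerm_surj {K : ℕ} (a : Fin (K + 1)) (σ : Equiv.Perm (Fin (K + 1))) (hσ : σ 0 = a) :
    ∃ τ, extPerm a τ = σ := by
  classical
  set e : Option (Fin K) ≃ Option (Fin K) :=
    (finSuccEquiv K).symm.trans (σ.trans (finSuccEquiv' a)) with he_def
  have he : e none = none := by
    simp [he_def, finSuccEquiv_symm_none, hσ, finSuccEquiv'_at]
  refine ⟨e.removeNone, ?_⟩
  ext i
  refine Fin.cases ?_ (fun j => ?_) i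
  · rw [extPerm_zero, hσ]
  · rw [extPerm_succ]
    have hsome : ∃ k, e (some j) = some k := by
      rcases hE : e (some j) with _ | k
      · exact absurd (e.injective (hE.trans he.symm)) (by simp)
      · exact ⟨k, rfl⟩
    have h2 : some (Equiv.removeNone e j) = e (some j) := Equiv.removeNone_some e hsome
    have h3 : e (some j) = finSuccEquiv' a (σ j.succ) := by
      simp [he_def, finSuccEquiv_symm_some]
    rw [h3] at h2
    have := congrArg (finSuccEquiv' a).symm h2
    rw [Equiv.symm_apply_apply, finSuccEquiv'_symm_some] at this
    exact congrArg Fin.val this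

/-- The `(n, N-n)` shuffles of `Fin N`, described via `σ` rather than `σ⁻¹`:
positions within the same block appear in increasing order. -/
def shuffSet (N n : ℕ) : Finset (Equiv.Perm (Fin N)) :=
  Finset.univ.filter fun σ =>
    ∀ u v : Fin N, u < v →
      (((σ u).1 < n ∧ (σ v).1 < n) ∨ (n ≤ (σ u).1 ∧ n ≤ (σ v).1)) → σ u < σ v

lemma mem_shuffSet {N n : ℕ} {σ : Equiv.Perm (Fin N)} :
    σ ∈ shuffSet N n ↔ ∀ u v : Fin N, u < v →
      (((σ u).1 < n ∧ (σ v).1 < n) ∨ (n ≤ (σ u).1 ∧ n ≤ (σ v).1)) → σ u < σ v := by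
  simp [shuffSet]

lemma Shuff_eq_shuffSet (n m : ℕ) : Shuff n m = shuffSet (n + m) n := by
  ext σ
  simp only [Shuff, shuffSet, Finset.mem_filter, Finset.mem_univ, true_and]
  constructor
  · intro H u v huv hblk
    rcases lt_trichotomy (σ u) (σ v) with h | h | h
    · exact h
    · exact absurd (σ.injective h) huv.ne
    · exfalso
      have H2 := H (σ v) (σ u) h
      rcases hblk with ⟨h1, h2⟩ | ⟨h1, h2⟩
      · have := H2.1 h1
        simp only [Equiv.Perm.inv_def, Equiv.symm_apply_apply] at this
        exact absurd huv (not_lt.2 this.le)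
      · have := H2.2 h2
        simp only [Equiv.Perm.inv_def, Equiv.symm_apply_apply] at this
        exact absurd huv (not_lt.2 this.le)
  · intro H i j hij
    constructor
    · intro hj
      rcases lt_trichotomy (σ⁻¹ i) (σ⁻¹ j) with h | h | h
      · exact h
      · exact absurd (σ⁻¹.injective h) hij.ne
      · exfalso
        have := H _ _ h (Or.inl (by
          simp only [Equiv.Perm.inv_def, Equiv.apply_symm_apply]
          exact ⟨hj, lt_of_le_of_lt (Nat.le_of_lt hij) hj⟩))
        simp only [Equiv.Perm.inv_def, Equiv.apply_symm_apply] at this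
        exact absurd hij (not_lt.2 this.le)
    · intro hi
      rcases lt_trichotomy (σ⁻¹ i) (σ⁻¹ j) with h | h | h
      · exact h
      · exact absurd (σ⁻¹.injective h) hij.ne
      · exfalso
        have := H _ _ h (Or.inr (by
          simp only [Equiv.Perm.inv_def, Equiv.apply_symm_apply]
          exact ⟨le_trans hi (Nat.le_of_lt hij), hi⟩))
        simp only [Equiv.Perm.inv_def, Equiv.apply_symm_apply] at this
        exact absurd hij (not_lt.2 this.le)

lemma perm_eq_one {N : ℕ} (σ : Equiv.Perm (Fin N)) (h : ∀ u v : Fin N, u < v → σ u < σ v) :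
    σ = 1 := by
  have hm : StrictMono σ := fun u v huv => h u v huv
  have e := StrictMono.orderIsoOfSurjective σ hm σ.surjective
  ext i
  have h2 := Fin.coe_orderIso_apply (StrictMono.orderIsoOfSurjective σ hm σ.surjective) i
  rw [congrFun (StrictMono.coe_orderIsoOfSurjective σ hm σ.surjective) i] at h2
  simpa using h2

lemma shuffSet_left (N : ℕ) : shuffSet N 0 = {1} := by
  ext σ
  simp only [Finset.mem_singleton, mem_shuffSet]
  constructor
  · intro H
    exact perm_eq_one σ fun u v huv => H u v huv (Or.inr ⟨Nat.zero_le _, Nat.zero_le _⟩)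
  · rintro rfl
    intro u v huv _
    simpa using huv
  
lemma shuffSet_full (N : ℕ) : shuffSet N N = {1} := by
  ext σ
  simp only [Finset.mem_singleton, mem_shuffSet]
  constructor
  · intro H
    exact perm_eq_one σ fun u v huv => H u v huv (Or.inl ⟨(σ u).2, (σ v).2⟩)
  · rintro rfl
    intro u v huv _
    simpa using huv

lemma shuff_first {N' n : ℕ} (hn : 0 < n) (hnN : n < N' + 1) {σ : Equiv.Perm (Fin (N' + 1))}
    (hσ : σ ∈ shuffSet (N' + 1) n) : σ 0 = 0 ∨ σ 0 = ⟨n, hnN⟩ := by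
  rw [mem_shuffSet] at hσ
  by_contra hc
  push_neg at hc
  obtain ⟨h1, h2⟩ := hc
  rcases Nat.lt_or_ge (σ 0).1 n with hb | hb
  · set w := σ.symm 0 with hw
    have hw0 : w ≠ 0 := by
      intro h
      have h' := congrArg σ h
      rw [hw, Equiv.apply_symm_apply] at h'
      exact h1 h'.symm
    have hwpos : (0 : Fin (N' + 1)) < w := Fin.pos_of_ne_zero hw0
    have := hσ 0 w hwpos (Or.inl ⟨hb, by rw [hw, Equiv.apply_symm_apply]; simpa using hn⟩)
    simp only [hw, Equiv.apply_symm_apply] at this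
    exact absurd this (Fin.not_lt_zero _)
  · set w := σ.symm ⟨n, hnN⟩ with hw
    have hw0 : w ≠ 0 := by
      intro h
      have h' := congrArg σ h
      rw [hw, Equiv.apply_symm_apply] at h'
      exact h2 h'.symm
    have hwpos : (0 : Fin (N' + 1)) < w := Fin.pos_of_ne_zero hw0
    have := hσ 0 w hwpos (Or.inr ⟨hb, by rw [hw, Equiv.apply_symm_apply]⟩)
    rw [hw, Equiv.apply_symm_apply] at this
    exact absurd (show (σ 0).1 < n from this) (by omega)

lemma transfer₁ {N' n' : ℕ} (τ : Equiv.Perm (Fin N')) :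
    extPerm 0 τ ∈ shuffSet (N' + 1) (n' + 1) ↔ τ ∈ shuffSet N' n' := by
  have hval : ∀ x : Fin N', (((0 : Fin (N' + 1)).succAbove x)).1 = x.1 + 1 :=
    fun x => succAbove_val_ge (Nat.zero_le _)
  simp only [mem_shuffSet]
  constructor
  · intro H p q hpq hblk
    have := H p.succ q.succ (by simpa [Fin.succ_lt_succ_iff] using hpq) ?_
    · rw [extPerm_succ, extPerm_succ, Fin.lt_def, hval, hval] at this
      rw [Fin.lt_def]
      omega
    · rw [extPerm_succ, extPerm_succ, hval, hval]
      rcases hblk with ⟨ha, hb⟩ | ⟨ha, hb⟩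
      · exact Or.inl ⟨by omega, by omega⟩
      · exact Or.inr ⟨by omega, by omega⟩
  · intro H u v huv hblk
    rcases Fin.eq_zero_or_eq_succ u with rfl | ⟨p, rfl⟩
    · rcases Fin.eq_zero_or_eq_succ v with rfl | ⟨q, rfl⟩
      · exact absurd huv (lt_irrefl _)
      · rw [extPerm_zero, extPerm_succ, Fin.lt_def, hval]
        simp
    · rcases Fin.eq_zero_or_eq_succ v with rfl | ⟨q, rfl⟩
      · exact absurd huv (by simp [Fin.lt_def])
      · rw [extPerm_succ, extPerm_succ] at hblk ⊢
        rw [hval, hval] at hblk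
        have hpq : p < q := by
          rw [Fin.lt_def] at huv ⊢
          simpa using huv
        have := H p q hpq (by
          rcases hblk with ⟨ha, hb⟩ | ⟨ha, hb⟩
          · exact Or.inl ⟨by omega, by omega⟩
          · exact Or.inr ⟨by omega, by omega⟩)
        rw [Fin.lt_def] at this ⊢
        rw [hval, hval]
        omega

lemma transfer₂ {N' n : ℕ} (hnN : n < N' + 1) (τ : Equiv.Perm (Fin N')) :
    extPerm ⟨n, hnN⟩ τ ∈ shuffSet (N' + 1) n ↔ τ ∈ shuffSet N' n := by
  have hval : ∀ x : Fin N', (((⟨n, hnN⟩ : Fin (N' + 1)).succAbove x)).1 =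
      if x.1 < n then x.1 else x.1 + 1 := by
    intro x
    rcases Nat.lt_or_ge x.1 n with h | h
    · rw [succAbove_val_lt h, if_pos h]
    · rw [succAbove_val_ge h, if_neg (by omega)]
  simp only [mem_shuffSet]
  constructor
  · intro H p q hpq hblk
    have := H p.succ q.succ (by simpa [Fin.succ_lt_succ_iff] using hpq) ?_
    · rw [extPerm_succ, extPerm_succ, Fin.lt_def, hval, hval] at this
      rw [Fin.lt_def]
      split_ifs at this <;> omega
    · rw [extPerm_succ, extPerm_succ, hval, hval]
      rcases hblk with ⟨ha, hb⟩ | ⟨ha, hb⟩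
      · refine Or.inl ⟨?_, ?_⟩ <;> split_ifs <;> omega
      · refine Or.inr ⟨?_, ?_⟩ <;> split_ifs <;> omega
  · intro H u v huv hblk
    rcases Fin.eq_zero_or_eq_succ u with rfl | ⟨p, rfl⟩
    · rcases Fin.eq_zero_or_eq_succ v with rfl | ⟨q, rfl⟩
      · exact absurd huv (lt_irrefl _)
      · rw [extPerm_zero, extPerm_succ] at hblk ⊢
        rw [Fin.lt_def, Fin.val_mk, hval]
        rw [hval, Fin.val_mk] at hblk
        rcases hblk with ⟨ha, hb⟩ | ⟨ha, hb⟩ <;> split_ifs at hb ⊢ <;> omega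
    · rcases Fin.eq_zero_or_eq_succ v with rfl | ⟨q, rfl⟩
      · exact absurd huv (by simp [Fin.lt_def])
      · rw [extPerm_succ, extPerm_succ] at hblk ⊢
        rw [hval, hval] at hblk
        have hpq : p < q := by
          rw [Fin.lt_def] at huv ⊢
          simpa using huv
        have := H p q hpq (by
          rcases hblk with ⟨ha, hb⟩ | ⟨ha, hb⟩
          · refine Or.inl ⟨?_, ?_⟩ <;> split_ifs at ha hb <;> omega
          · refine Or.inr ⟨?_, ?_⟩ <;> split_ifs at ha hb <;> omega)
        rw [Fin.lt_def] at this ⊢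
        rw [hval, hval]
        split_ifs <;> omega

lemma shuffSet_split {N' n' : ℕ} (hnN : n' + 1 < N' + 1) :
    shuffSet (N' + 1) (n' + 1) =
      ((shuffSet N' n').image (extPerm 0)) ∪
        ((shuffSet N' (n' + 1)).image (extPerm ⟨n' + 1, hnN⟩)) := by
  ext σ
  simp only [Finset.mem_union, Finset.mem_image]
  constructor
  · intro hσ
    rcases shuff_first (Nat.succ_pos n') hnN hσ with h0 | h0
    · obtain ⟨τ, rfl⟩ := extPerm_surj 0 σ h0
      exact Or.inl ⟨τ, (transfer₁ τ).1 hσ, rfl⟩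
    · obtain ⟨τ, rfl⟩ := extPerm_surj ⟨n' + 1, hnN⟩ σ h0
      exact Or.inr ⟨τ, (transfer₂ hnN τ).1 hσ, rfl⟩
  · rintro (⟨τ, hτ, rfl⟩ | ⟨τ, hτ, rfl⟩)
    · exact (transfer₁ τ).2 hτ
    · exact (transfer₂ hnN τ).2 hτ

lemma shuffSet_split_disj {N' n' : ℕ} (hnN : n' + 1 < N' + 1) :
    Disjoint ((shuffSet N' n').image (extPerm 0))
      ((shuffSet N' (n' + 1)).image (extPerm ⟨n' + 1, hnN⟩)) := by
  rw [Finset.disjoint_left]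
  rintro σ h1 h2
  rw [Finset.mem_image] at h1 h2
  obtain ⟨τ, _, rfl⟩ := h1
  obtain ⟨τ', _, hτ'⟩ := h2
  have h0 : extPerm (⟨n' + 1, hnN⟩ : Fin (N' + 1)) τ' 0 = extPerm 0 τ 0 := by rw [hτ']
  rw [extPerm_zero, extPerm_zero] at h0
  exact absurd (congrArg Fin.val h0) (by simp)

end Aux

/-! ### Analytic lemmas -/

section Analysis

lemma iterIntegral_nil (y x : ℝ) : iterIntegral [] y x = 1 := rfl

lemma iterIntegral_cons (g : ℝ → ℝ) (fs : List (ℝ → ℝ)) (y x : ℝ) :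
    iterIntegral (g :: fs) y x = ∫ t in y..x, g t * iterIntegral fs y t := rfl

lemma iterIntegral_continuous (y : ℝ) :
    ∀ (fs : List (ℝ → ℝ)), (∀ g ∈ fs, Continuous g) → Continuous (iterIntegral fs y)
  | [], _ => by
      have h1 : iterIntegral [] y = fun _ => 1 := rfl
      rw [h1]
      exact continuous_const
  | g :: fs, h => by
      have hg : Continuous g := h g (List.mem_cons_self)
      have hfs := iterIntegral_continuous y fs (fun p hp => h p (List.mem_cons_of_mem _ hp))
      have hint : Continuous fun t => g t * iterIntegral fs y t := hg.mul hfs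
      have h1 : iterIntegral (g :: fs) y = fun x => ∫ t in y..x, g t * iterIntegral fs y t := rfl
      rw [h1]
      exact intervalIntegral.continuous_primitive (fun a b => hint.intervalIntegrable a b) y

lemma iter_ofFn_cont (y : ℝ) {k : ℕ} (F : Fin k → ℝ → ℝ) (h : ∀ j, Continuous (F j)) :
    Continuous (iterIntegral (List.ofFn F) y) := by
  refine iterIntegral_continuous y _ ?_
  intro g hg
  rw [List.mem_ofFn] at hg
  obtain ⟨j, rfl⟩ := hg
  exact h j

lemma iterIntegral_hasDerivAt (y : ℝ) (g : ℝ → ℝ) (fs : List (ℝ → ℝ))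
    (hg : Continuous g) (hfs : Continuous (iterIntegral fs y)) (t : ℝ) :
    HasDerivAt (iterIntegral (g :: fs) y) (g t * iterIntegral fs y t) t := by
  have hint : Continuous fun s => g s * iterIntegral fs y s := hg.mul hfs
  have h1 : iterIntegral (g :: fs) y = fun x => ∫ s in y..x, g s * iterIntegral fs y s := rfl
  rw [h1]
  exact intervalIntegral.integral_hasDerivAt_right (hint.intervalIntegrable _ _)
    (hint.stronglyMeasurableAtFilter _ _) hint.continuousAt

lemma iterIntegral_mul (y x : ℝ) (g h : ℝ → ℝ) (fs gs : List (ℝ → ℝ))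
    (hg : Continuous g) (hh : Continuous h)
    (hfs : ∀ p ∈ fs, Continuous p) (hgs : ∀ p ∈ gs, Continuous p) :
    iterIntegral (g :: fs) y x * iterIntegral (h :: gs) y x =
      ∫ t in y..x, (g t * iterIntegral fs y t * iterIntegral (h :: gs) y t
        + iterIntegral (g :: fs) y t * (h t * iterIntegral gs y t)) := by
  have hcf := iterIntegral_continuous y fs hfs
  have hcg := iterIntegral_continuous y gs hgs
  have hcgf : Continuous (iterIntegral (g :: fs) y) :=
    iterIntegral_continuous y _ (by
      intro p hp
      rcases List.mem_cons.1 hp with rfl | hp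
      · exact hg
      · exact hfs p hp)
  have hcgh : Continuous (iterIntegral (h :: gs) y) :=
    iterIntegral_continuous y _ (by
      intro p hp
      rcases List.mem_cons.1 hp with rfl | hp
      · exact hh
      · exact hgs p hp)
  have hu : ∀ t ∈ Set.uIcc y x,
      HasDerivAt (iterIntegral (g :: fs) y) (g t * iterIntegral fs y t) t :=
    fun t _ => iterIntegral_hasDerivAt y g fs hg hcf t
  have hv : ∀ t ∈ Set.uIcc y x,
      HasDerivAt (iterIntegral (h :: gs) y) (h t * iterIntegral gs y t) t :=
    fun t _ => iterIntegral_hasDerivAt y h gs hh hcg t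
  have hu' : IntervalIntegrable (fun t => g t * iterIntegral fs y t) volume y x :=
    (hg.mul hcf).intervalIntegrable _ _
  have hv' : IntervalIntegrable (fun t => h t * iterIntegral gs y t) volume y x :=
    (hh.mul hcg).intervalIntegrable _ _
  have H := intervalIntegral.integral_deriv_mul_eq_sub hu hv hu' hv'
  have h0u : iterIntegral (g :: fs) y y = 0 := by
    rw [iterIntegral_cons]
    exact intervalIntegral.integral_same
  rw [h0u, zero_mul, sub_zero] at H
  exact H.symm

end Analysis

/-! ### List helpers -/

section Lists

lemma ofFn_fin_eq {α : Type*} {k : ℕ} {F G : Fin k → α} (h : ∀ j, F j = G j) :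
    List.ofFn F = List.ofFn G := congrArg List.ofFn (funext h)

lemma f_idx {N : ℕ} (f : Fin N → ℝ → ℝ) {i j : Fin N} (h : i.1 = j.1) : f i = f j :=
  congrArg f (Fin.ext h)

lemma ofFn_congr'' {α : Type*} {k l : ℕ} (h : k = l) {F : Fin k → α} {G : Fin l → α}
    (hFG : ∀ i : Fin l, F ⟨i.1, by rw [h]; exact i.2⟩ = G i) : List.ofFn F = List.ofFn G := by
  subst h
  exact congrArg List.ofFn (funext fun i => hFG i)

lemma forall₂_ofFn {α : Type*} (R : α → α → Prop) :
    ∀ {k : ℕ} (F G : Fin k → α), (∀ j, R (F j) (G j)) →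
      List.Forall₂ R (List.ofFn F) (List.ofFn G)
  | 0, F, G, _ => by
      rw [List.ofFn_zero, List.ofFn_zero]
      exact List.Forall₂.nil
  | (k + 1), F, G, h => by
      rw [List.ofFn_succ, List.ofFn_succ]
      exact List.Forall₂.cons (h 0) (forall₂_ofFn R _ _ (fun j => h j.succ))

lemma iterIntegral_congrOn {y x : ℝ} :
    ∀ {fs gs : List (ℝ → ℝ)},
      List.Forall₂ (fun p q => Set.EqOn p q (Set.uIcc y x)) fs gs →
      ∀ t ∈ Set.uIcc y x, iterIntegral fs y t = iterIntegral gs y t := by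
  intro fs gs hfg
  induction hfg with
  | nil => intro t _; rfl
  | @cons p q fs' gs' h₁ _ ih =>
      intro t ht
      rw [iterIntegral_cons, iterIntegral_cons]
      apply intervalIntegral.integral_congr
      intro s hs
      have hs' : s ∈ Set.uIcc y x := Set.uIcc_subset_uIcc Set.left_mem_uIcc ht hs
      simp only [h₁ hs', ih s hs']

end Lists

/-! ### The main induction -/

theorem key (y : ℝ) (N : ℕ) : ∀ (n m : ℕ) (h : n + m = N) (f : Fin N → ℝ → ℝ),
    (∀ j, Continuous (f j)) → ∀ x : ℝ,
    iterIntegral (List.ofFn fun j : Fin n => f ⟨j.1, by have := j.2; omega⟩) y x *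
      iterIntegral (List.ofFn fun j : Fin m => f ⟨n + j.1, by have := j.2; omega⟩) y x =
    ∑ σ ∈ shuffSet N n, iterIntegral (List.ofFn fun j => f (σ j)) y x := by
  induction N with
  | zero =>
      intro n m h f hf x
      obtain rfl : n = 0 := by omega
      obtain rfl : m = 0 := by omega
      rw [shuffSet_left, Finset.sum_singleton]
      simp [List.ofFn_zero, iterIntegral_nil]
  | succ N' ih =>
      intro n m h f hf x
      rcases n with _ | n'
      · -- n = 0
        obtain rfl : m = N' + 1 := by omega
        rw [shuffSet_left, Finset.sum_singleton, List.ofFn_zero, iterIntegral_nil, one_mul]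
        congr 1
        exact ofFn_fin_eq fun j => f_idx f (by simp)
      rcases m with _ | m'
      · -- m = 0
        obtain rfl : n' = N' := by omega
        rw [shuffSet_full, Finset.sum_singleton, List.ofFn_zero, iterIntegral_nil, mul_one]
        congr 1
      · -- main case
        have hnN : n' + 1 < N' + 1 := by omega
        -- index-juggling equalities
        have eA : (List.ofFn fun j : Fin (n' + 1) =>
              f ⟨j.1, by have := j.2; omega⟩) =
            f 0 :: List.ofFn (fun j : Fin n' =>
              f ((0 : Fin (N' + 1)).succAbove ⟨j.1, by have := j.2; omega⟩)) := by
          rw [List.ofFn_succ]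
          refine congrArg₂ List.cons (f_idx f (by simp)) ?_
          exact ofFn_fin_eq fun j => f_idx f
            (by rw [succAbove_val_ge (Nat.zero_le _)]
                simp only [Fin.val_mk, Fin.val_succ] <;> omega)
        have eB : (List.ofFn fun j : Fin (m' + 1) =>
              f ⟨n' + 1 + j.1, by have := j.2; omega⟩) =
            f ⟨n' + 1, hnN⟩ :: List.ofFn (fun j : Fin m' =>
              f ((⟨n' + 1, hnN⟩ : Fin (N' + 1)).succAbove
                ⟨n' + 1 + j.1, by have := j.2; omega⟩)) := by
          rw [List.ofFn_succ]
          refine congrArg₂ List.cons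
            (f_idx f (by simp only [Fin.val_mk, Fin.val_zero] <;> omega)) ?_
          exact ofFn_fin_eq fun j => f_idx f
            (by rw [succAbove_val_ge (by simp only [Fin.val_mk] <;> omega)]
                simp only [Fin.val_mk, Fin.val_succ] <;> omega)
        -- the two induction hypotheses, in canonical form
        have IH1 : ∀ t : ℝ,
            iterIntegral (List.ofFn fun j : Fin n' =>
              f ((0 : Fin (N' + 1)).succAbove ⟨j.1, by have := j.2; omega⟩)) y t *
            iterIntegral (List.ofFn fun j : Fin (m' + 1) =>
              f ((0 : Fin (N' + 1)).succAbove ⟨n' + j.1, by have := j.2; omega⟩)) y t =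
            ∑ τ ∈ shuffSet N' n', iterIntegral
              (List.ofFn fun j => f ((0 : Fin (N' + 1)).succAbove (τ j))) y t :=
          fun t => ih n' (m' + 1) (by omega)
            (fun i => f ((0 : Fin (N' + 1)).succAbove i)) (fun j => hf _) t
        have IH2 : ∀ t : ℝ,
            iterIntegral (List.ofFn fun j : Fin (n' + 1) =>
              f ((⟨n' + 1, hnN⟩ : Fin (N' + 1)).succAbove ⟨j.1, by have := j.2; omega⟩)) y t *
            iterIntegral (List.ofFn fun j : Fin m' =>
              f ((⟨n' + 1, hnN⟩ : Fin (N' + 1)).succAbove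
                ⟨n' + 1 + j.1, by have := j.2; omega⟩)) y t =
            ∑ τ ∈ shuffSet N' (n' + 1), iterIntegral
              (List.ofFn fun j => f ((⟨n' + 1, hnN⟩ : Fin (N' + 1)).succAbove (τ j))) y t :=
          fun t => ih (n' + 1) m' (by omega)
            (fun i => f ((⟨n' + 1, hnN⟩ : Fin (N' + 1)).succAbove i)) (fun j => hf _) t
        -- rewrite IH1's second list and IH2's first list into the canonical goal lists
        have e1 : (List.ofFn fun j : Fin (m' + 1) =>
              f ((0 : Fin (N' + 1)).succAbove ⟨n' + j.1, by have := j.2; omega⟩)) =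
            List.ofFn fun j : Fin (m' + 1) => f ⟨n' + 1 + j.1, by have := j.2; omega⟩ :=
          ofFn_fin_eq fun j => f_idx f
            (by rw [succAbove_val_ge (Nat.zero_le _)]
                simp only [Fin.val_mk] <;> omega)
        have e2 : (List.ofFn fun j : Fin (n' + 1) =>
              f ((⟨n' + 1, hnN⟩ : Fin (N' + 1)).succAbove ⟨j.1, by have := j.2; omega⟩)) =
            List.ofFn fun j : Fin (n' + 1) => f ⟨j.1, by have := j.2; omega⟩ :=
          ofFn_fin_eq fun j => f_idx f
            (by rw [succAbove_val_lt (by simp only [Fin.val_mk] <;> (have := j.2; omega))])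
        rw [e1] at IH1
        rw [e2] at IH2
        -- split the shuffle sum
        rw [shuffSet_split hnN, Finset.sum_union (shuffSet_split_disj hnN),
          Finset.sum_image (fun τ _ τ' _ hE => extPerm_injective _ hE),
          Finset.sum_image (fun τ _ τ' _ hE => extPerm_injective _ hE)]
        have hsum1 : ∀ τ : Equiv.Perm (Fin N'),
            (List.ofFn fun j => f (extPerm 0 τ j)) =
              f 0 :: List.ofFn (fun j => f ((0 : Fin (N' + 1)).succAbove (τ j))) := by
          intro τ
          rw [List.ofFn_succ]
          refine congrArg₂ List.cons (f_idx f (by rw [extPerm_zero])) ?_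
          exact ofFn_fin_eq fun j => f_idx f (by rw [extPerm_succ])
        have hsum2 : ∀ τ : Equiv.Perm (Fin N'),
            (List.ofFn fun j => f (extPerm ⟨n' + 1, hnN⟩ τ j)) =
              f ⟨n' + 1, hnN⟩ :: List.ofFn (fun j =>
                f ((⟨n' + 1, hnN⟩ : Fin (N' + 1)).succAbove (τ j))) := by
          intro τ
          rw [List.ofFn_succ]
          refine congrArg₂ List.cons (f_idx f (by rw [extPerm_zero])) ?_
          exact ofFn_fin_eq fun j => f_idx f (by rw [extPerm_succ])
        simp only [hsum1, hsum2, iterIntegral_cons]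
        -- now handle the left-hand side
        rw [eA, eB, iterIntegral_mul y x _ _ _ _ (hf _) (hf _)
          (by
            intro p hp
            rw [List.mem_ofFn] at hp
            obtain ⟨j, rfl⟩ := hp
            exact hf _)
          (by
            intro p hp
            rw [List.mem_ofFn] at hp
            obtain ⟨j, rfl⟩ := hp
            exact hf _)]
        rw [intervalIntegral.integral_congr
          (g := fun t =>
            (∑ τ ∈ shuffSet N' n', f 0 t * iterIntegral
              (List.ofFn fun j => f ((0 : Fin (N' + 1)).succAbove (τ j))) y t) +
            ∑ τ ∈ shuffSet N' (n' + 1), f ⟨n' + 1, hnN⟩ t * iterIntegral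
              (List.ofFn fun j => f ((⟨n' + 1, hnN⟩ : Fin (N' + 1)).succAbove (τ j))) y t)
          (fun t _ => by
            rw [mul_assoc, ← eB, ← eA, IH1 t, mul_left_comm, IH2 t,
              Finset.mul_sum, Finset.mul_sum])]
        rw [intervalIntegral.integral_add
          (by
            apply Continuous.intervalIntegrable
            exact continuous_finset_sum _
              (fun τ _ => (hf _).mul (iter_ofFn_cont y _ (fun j => hf _))))
          (by
            apply Continuous.intervalIntegrable
            exact continuous_finset_sum _
              (fun τ _ => (hf _).mul (iter_ofFn_cont y _ (fun j => hf _))))]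
        rw [intervalIntegral.integral_finset_sum
            (f := fun (τ : Equiv.Perm (Fin N')) t => f 0 t * iterIntegral
              (List.ofFn fun j => f ((0 : Fin (N' + 1)).succAbove (τ j))) y t)
            (fun τ _ => ((hf _).mul (iter_ofFn_cont y _ (fun j => hf _))).intervalIntegrable _ _),
          intervalIntegral.integral_finset_sum
            (f := fun (τ : Equiv.Perm (Fin N')) t => f ⟨n' + 1, hnN⟩ t * iterIntegral
              (List.ofFn fun j => f ((⟨n' + 1, hnN⟩ : Fin (N' + 1)).succAbove (τ j))) y t)
            (fun τ _ => ((hf _).mul (iter_ofFn_cont y _ (fun j => hf _))).intervalIntegrable _ _)]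

lemma iterIntegral_shuffle_aux (x y : ℝ) (n m : ℕ) (f g : Fin (n + m) → ℝ → ℝ)
    (hgc : ∀ j, Continuous (g j)) (hEq : ∀ j, Set.EqOn (g j) (f j) (Set.uIcc y x)) :
    iterIntegral (List.ofFn fun j : Fin n => f (Fin.castAdd m j)) y x *
      iterIntegral (List.ofFn fun j : Fin m => f (Fin.natAdd n j)) y x =
    ∑ σ ∈ Shuff n m, iterIntegral (List.ofFn fun j => f (σ j)) y x := by
  have hx : x ∈ Set.uIcc y x := Set.right_mem_uIcc
  have c1 : iterIntegral (List.ofFn fun j : Fin n => f (Fin.castAdd m j)) y x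
      = iterIntegral (List.ofFn fun j : Fin n => g ⟨j.1, by have := j.2; omega⟩) y x := by
    refine (iterIntegral_congrOn ?_ x hx).symm
    refine forall₂_ofFn _ _ _ fun j => ?_
    intro t ht
    rw [hEq _ ht]
    exact congrFun (f_idx f (by simp)) t
  have c2 : iterIntegral (List.ofFn fun j : Fin m => f (Fin.natAdd n j)) y x
      = iterIntegral (List.ofFn fun j : Fin m => g ⟨n + j.1, by have := j.2; omega⟩) y x := by
    refine (iterIntegral_congrOn ?_ x hx).symm
    refine forall₂_ofFn _ _ _ fun j => ?_
    intro t ht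
    rw [hEq _ ht]
    exact congrFun (f_idx f (by simp)) t
  rw [c1, c2, Shuff_eq_shuffSet]
  refine (key y (n + m) n m rfl g hgc x).trans ?_
  refine Finset.sum_congr rfl fun σ _ => ?_
  exact iterIntegral_congrOn (forall₂_ofFn _ _ _ fun j => hEq (σ j)) x hx

/-- **The shuffle formula for iterated integrals.**  For continuous
`f₁,…,f_{n+m}` on a compact interval containing `x` and `y`,
`(∫_y^x α₁⋯αₙ)(∫_y^x α_{n+1}⋯α_{n+m}) = Σ_{σ ∈ Shuff(n,m)} ∫_y^x α_{σ(1)}⋯α_{σ(n+m)}`. -/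
theorem iterIntegral_shuffle (x y : ℝ) (n m : ℕ) (f : Fin (n + m) → ℝ → ℝ)
    (hf : ∀ j, ContinuousOn (f j) (Set.uIcc y x)) :
    iterIntegral (List.ofFn fun j : Fin n => f (Fin.castAdd m j)) y x *
      iterIntegral (List.ofFn fun j : Fin m => f (Fin.natAdd n j)) y x =
    ∑ σ ∈ Shuff n m, iterIntegral (List.ofFn fun j => f (σ j)) y x := by
  have hle : (y ⊓ x) ≤ (y ⊔ x) := inf_le_sup
  refine iterIntegral_shuffle_aux x y n m f
    (fun j t => f j ((Set.projIcc (y ⊓ x) (y ⊔ x) hle t) : ℝ)) (fun j => ?_) (fun j t ht => ?_)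
  · exact (hf j).comp_continuous (continuous_subtype_val.comp continuous_projIcc)
      (fun t => (Set.projIcc (y ⊓ x) (y ⊔ x) hle t).2)
  · have h2 : ((Set.projIcc (y ⊓ x) (y ⊔ x) hle t) : ℝ) = t :=
      congrArg Subtype.val (Set.projIcc_of_mem hle ht)
    exact congrArg (f j) h2
end

section
/- Ree's inverse formula: let A be a finite alphabet, X = {X_a : a ∈ A} noncommuting indeterminates, X the multiplicative map on words with X(a) = X_a, and R the string-reversing involution on words (R(a_1⋯a_n) = a_n⋯a_1). Set G(X) := Σ_{w∈A*} w·X(w) and H(X) := Σ_{w∈A*} (-1)^{|w|} R(w)·X(w), where |w| is the length of w. Then G(X) ⧢ H(X) = 1, the shuffle product of the series being taken coefficientwise in the shuffle algebra Sh_ℚ[A]. -/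
/-- The shuffle product of two words over `A`, as a rational linear combination
of words, defined by the recursion `1 ⧢ w = w ⧢ 1 = w` and
`au ⧢ bv = a(u ⧢ bv) + b(au ⧢ v)`. -/
noncomputable def shuffleWord {A : Type*} : List A → List A → (List A →₀ ℚ)
  | [], w => Finsupp.single w 1
  | u, [] => Finsupp.single u 1
  | x :: u, y :: v =>
      Finsupp.mapDomain (List.cons x) (shuffleWord u (y :: v)) +
      Finsupp.mapDomain (List.cons y) (shuffleWord (x :: u) v)
  termination_by u v => u.length + v.length
  decreasing_by all_goals simp_wf


lemma sw_nil_left {A : Type*} (w : List A) : shuffleWord [] w = Finsupp.single w 1 := by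
  rw [shuffleWord]

lemma sw_nil_right {A : Type*} (u : List A) : shuffleWord u [] = Finsupp.single u 1 := by
  cases u with
  | nil => rw [shuffleWord]
  | cons x u => rw [shuffleWord]; simp

lemma sw_cons_cons {A : Type*} (x y : A) (u v : List A) :
    shuffleWord (x :: u) (y :: v) =
      Finsupp.mapDomain (List.cons x) (shuffleWord u (y :: v)) +
      Finsupp.mapDomain (List.cons y) (shuffleWord (x :: u) v) := by
  rw [shuffleWord]

lemma md_comm {A : Type*} (x a : A) (f : List A →₀ ℚ) :
    Finsupp.mapDomain (List.cons x) (Finsupp.mapDomain (· ++ [a]) f) =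
      Finsupp.mapDomain (· ++ [a]) (Finsupp.mapDomain (List.cons x) f) := by
  rw [← Finsupp.mapDomain_comp, ← Finsupp.mapDomain_comp]; rfl

lemma sw_append {A : Type*} (a b : A) :
    ∀ (n : ℕ) (u v : List A), u.length + v.length ≤ n →
    shuffleWord (u ++ [a]) (v ++ [b]) =
      Finsupp.mapDomain (· ++ [a]) (shuffleWord u (v ++ [b])) +
      Finsupp.mapDomain (· ++ [b]) (shuffleWord (u ++ [a]) v) := by
  intro n
  induction n with
  | zero =>
    intro u v h
    rw [List.length_eq_zero_iff.mp (by omega : u.length = 0),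
        List.length_eq_zero_iff.mp (by omega : v.length = 0)]
    simp only [List.nil_append, sw_nil_left, sw_nil_right, sw_cons_cons,
      Finsupp.mapDomain_single, List.singleton_append]
    rw [add_comm]
  | succ n ih =>
    intro u v h
    match u, v with
    | [], [] =>
      simp only [List.nil_append, sw_nil_left, sw_nil_right, sw_cons_cons,
        Finsupp.mapDomain_single, List.singleton_append]
      rw [add_comm]
    | [], y :: v =>
      have ihv := ih [] v (by simp at h ⊢; omega)
      simp only [List.nil_append, List.cons_append] at *
      rw [sw_cons_cons, sw_cons_cons, ihv]
      simp only [Finsupp.mapDomain_add, sw_nil_left, sw_nil_right, md_comm,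
        Finsupp.mapDomain_single, List.cons_append, List.singleton_append, List.append_assoc]
      abel
    | x :: u, [] =>
      have ihu := ih u [] (by simp at h ⊢; omega)
      simp only [List.nil_append, List.cons_append] at *
      rw [sw_cons_cons, sw_cons_cons, ihu]
      simp only [Finsupp.mapDomain_add, sw_nil_left, sw_nil_right, md_comm,
        Finsupp.mapDomain_single, List.cons_append, List.singleton_append, List.append_assoc]
      abel
    | x :: u, y :: v =>
      have ih1 := ih u (y :: v) (by simp at h ⊢; omega)
      have ih2 := ih (x :: u) v (by simp at h ⊢; omega)
      simp only [List.cons_append] at *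
      rw [sw_cons_cons, sw_cons_cons x y u (v ++ [b]),
        sw_cons_cons x y (u ++ [a]) v, ih1, ih2,
        Finsupp.mapDomain_add, Finsupp.mapDomain_add,
        Finsupp.mapDomain_add, Finsupp.mapDomain_add]
      simp only [md_comm]
      abel

lemma sw_append' {A : Type*} (a b : A) (u v : List A) :
    shuffleWord (u ++ [a]) (v ++ [b]) =
      Finsupp.mapDomain (· ++ [a]) (shuffleWord u (v ++ [b])) +
      Finsupp.mapDomain (· ++ [b]) (shuffleWord (u ++ [a]) v) :=
  sw_append a b (u.length + v.length) u v le_rfl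

/-- **Ree's inverse formula: `G(X) ⧢ H(X) = 1`.**  With
`G(X) = Σ_{w∈A*} w⋅X(w)` and `H(X) = Σ_{w∈A*} (-1)^{|w|} R(w)⋅X(w)`, where `R`
is the string-reversing involution, the coefficientwise shuffle product
`G(X) ⧢ H(X) = Σ_{u,v} (u ⧢ (-1)^{|v|} R(v))⋅X(u)X(v)` equals `1`: since the
monomial `X(u)X(v)` is `X(uv)`, its coefficient at `X(w)` is
`Σ_{uv=w} (-1)^{|v|} (u ⧢ R(v))`, which is `1` if `w` is empty and `0`
otherwise. -/
theorem ree_inverse_formula {A : Type*} [Fintype A] (w : List A) :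
    (∑ k ∈ Finset.range (w.length + 1),
      ((-1 : ℚ) ^ (w.drop k).length) •
        shuffleWord (w.take k) (w.drop k).reverse) =
    if w.length = 0 then Finsupp.single ([] : List A) (1 : ℚ) else 0 := by
  rcases eq_or_ne w [] with rfl | hw
  · simp [sw_nil_left]
  · rw [if_neg (by simpa using hw)]
    set n := w.length with hn
    have hn1 : 1 ≤ n := by
      have := List.length_pos_iff.mpr hw; omega
    set H : ℕ → (List A →₀ ℚ) := fun k =>
      if 1 ≤ k ∧ k ≤ n then
        ((-1 : ℚ) ^ (n - k + 1)) •
          Finsupp.mapDomain (· ++ (w.drop (k - 1)).take 1)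
            (shuffleWord (w.take (k - 1)) ((w.drop k).reverse))
      else 0 with hH
    have key : ∀ k ∈ Finset.range (n + 1),
        ((-1 : ℚ) ^ (w.drop k).length) • shuffleWord (w.take k) ((w.drop k).reverse)
          = H (k + 1) - H k := by
      intro k hk
      rw [Finset.mem_range] at hk
      have hkn : k ≤ n := by omega
      rw [List.length_drop, ← hn]
      rcases Nat.eq_zero_or_pos k with rfl | hk0
      · -- k = 0
        have h1 : (1 ≤ 0 + 1 ∧ 0 + 1 ≤ n) := ⟨le_refl _, by omega⟩
        simp only [hH, if_pos h1, if_neg (by omega : ¬(1 ≤ 0 ∧ 0 ≤ n)), sub_zero]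
        have hexp : n - (0 + 1) + 1 = n := by omega
        rw [hexp]
        simp only [Nat.sub_zero, Nat.add_sub_cancel, List.take_zero, List.drop_zero,
          sw_nil_left, Finsupp.mapDomain_single]
        congr 1
        cases w <;> simp
      rcases eq_or_lt_of_le hkn with rfl | hklt
      · -- k = n
        have h2 : ¬(1 ≤ n + 1 ∧ n + 1 ≤ n) := by omega
        simp only [hH, if_neg h2, if_pos (⟨hk0, le_refl n⟩ : 1 ≤ n ∧ n ≤ n), zero_sub]
        have hd : w.drop n = [] := by rw [hn]; exact List.drop_length (l := w)
        have ht : w.take n = w := by rw [hn]; exact List.take_length (l := w)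
        have hexp : n - n + 1 = 1 := by omega
        rw [hd, ht, hexp]
        have htake1 : (w.drop (n - 1)).take 1 = w.drop (n - 1) :=
          List.take_of_length_le (by rw [List.length_drop, ← hn]; omega)
        rw [htake1]
        simp only [List.reverse_nil, sw_nil_right, Finsupp.mapDomain_single,
          List.take_append_drop, Nat.sub_self, pow_zero, pow_one, one_smul, neg_smul,
          one_smul, neg_neg]
      · -- 1 ≤ k < n
        obtain ⟨m, rfl⟩ : ∃ m, k = m + 1 := ⟨k - 1, by omega⟩
        have hm : m < w.length := by omega
        have hm1 : m + 1 < w.length := by omega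
        have e1 : w.take (m + 1) = w.take m ++ [w[m]'hm] := by
          rw [List.take_succ, List.getElem?_eq_getElem hm]; rfl
        have e2 : (w.drop (m + 1)).reverse = (w.drop (m + 2)).reverse ++ [w[m + 1]'hm1] := by
          rw [List.drop_eq_getElem_cons hm1, List.reverse_cons]
        have e3 : (w.drop m).take 1 = [w[m]'hm] := by
          rw [List.drop_eq_getElem_cons hm]; rfl
        have e4 : (w.drop (m + 1)).take 1 = [w[m + 1]'hm1] := by
          rw [List.drop_eq_getElem_cons hm1]; rfl
        have h3 : (1 ≤ m + 2 ∧ m + 2 ≤ n) := ⟨by omega, by omega⟩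
        have h4 : (1 ≤ m + 1 ∧ m + 1 ≤ n) := ⟨by omega, by omega⟩
        have hexp : n - (m + 2) + 1 = n - (m + 1) := by omega
        simp only [hH, if_pos h3, if_pos h4, hexp,
          (by omega : m + 2 - 1 = m + 1), (by omega : m + 1 - 1 = m), e3, e4]
        rw [e1, e2, sw_append' (w[m]'hm) (w[m + 1]'hm1) (w.take m) ((w.drop (m + 2)).reverse),
          ← e2, ← e1]
        rw [smul_add, pow_succ, mul_neg_one, neg_smul, sub_neg_eq_add, add_comm]
    rw [Finset.sum_congr rfl key, Finset.sum_range_sub]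
    have hz1 : ¬(1 ≤ n + 1 ∧ n + 1 ≤ n) := by omega
    have hz0 : ¬(1 ≤ 0 ∧ 0 ≤ n) := by omega
    simp only [hH, if_neg hz1, if_neg hz0, sub_zero, sub_self]
end

section
/- Let x and y be commuting indeterminates. In the commutative polynomial ring (Sh_ℚ[{a,b}])[x,y], for every non-negative integer m, Σ_{k=0}^m x^k y^{m-k} [(ab)^k ⧢ (ab)^{m-k}] = Σ_{n=0}^{⌊m/2⌋} (4xy)^n (x+y)^{m-2n} T_{m,n}. -/
/-- The two-letter alphabet `{a, b}`. -/
inductive AB : Type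
  | a : AB
  | b : AB
  deriving DecidableEq

/-- The word `(ab)^p`. -/
def abpow (p : ℕ) : List AB := (List.replicate p [AB.a, AB.b]).flatten

/-- The number of occurrences of the subword `a²` in a word. -/
def countAA : List AB → ℕ
  | AB.a :: AB.a :: t => countAA (AB.a :: t) + 1
  | _ :: t => countAA t
  | [] => 0

/-- The number of occurrences of the subword `b²` in a word. -/
def countBB : List AB → ℕ
  | AB.b :: AB.b :: t => countBB (AB.b :: t) + 1
  | _ :: t => countBB t
  | [] => 0

/-- `T_{m,n}`: for `m ≥ n ≥ 0`, the sum of the distinct words occurring in the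
shuffle product `(ab)^n ⧢ (ab)^{m-n}` in which the subword `a²` appears
exactly `n` times; `0` for all other pairs. -/
noncomputable def T (m n : ℕ) : List AB →₀ ℚ :=
  if n ≤ m then
    ∑ w ∈ (shuffleWord (abpow n) (abpow (m - n))).support.filter
        (fun w => countAA w = n), Finsupp.single w 1
  else 0

/-- `U_{m,n}`: for `m ≥ n + 1 ≥ 2`, the sum of the distinct words arising in
the shuffle product `b(ab)^{n-1} ⧢ b(ab)^{m-n-1}` in which the subword `b²`
occurs exactly `n` times; `0` for all other pairs. -/
noncomputable def U (m n : ℕ) : List AB →₀ ℚ :=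
  if 1 ≤ n ∧ n + 1 ≤ m then
    ∑ w ∈ (shuffleWord (AB.b :: abpow (n - 1)) (AB.b :: abpow (m - n - 1))).support.filter
        (fun w => countBB w = n), Finsupp.single w 1
  else 0

/-- An element `p(x,y) ⋅ s` of the polynomial ring `(Sh_ℚ[{a,b}])[x,y]`, where
`p ∈ ℚ[x,y]` (with `x = X 0`, `y = X 1`) and `s ∈ Sh_ℚ[{a,b}]`: the monomial
`x^i y^j` with coefficient `c` contributes `Finsupp.single (i, j) (c • s)`. -/
noncomputable def polyMul (p : MvPolynomial (Fin 2) ℚ) (s : List AB →₀ ℚ) :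
    (ℕ × ℕ) →₀ (List AB →₀ ℚ) :=
  (AddMonoidAlgebra.coeff p).sum fun d c => Finsupp.single (d 0, d 1) (c • s)

section Machine

/-- states of the scanning automaton -/
inductive MSt : Type
  | E | A | D | S | X
  deriving DecidableEq

def mstep : MSt → AB → MSt
  | .E, .a => .A
  | .A, .a => .D
  | .A, .b => .E
  | .D, .b => .S
  | .S, .a => .D
  | .S, .b => .E
  | _, _ => .X

def runM : MSt → List AB → MSt
  | σ, [] => σ
  | σ, c :: w => runM (mstep σ c) w

def n4 : MSt → List AB → ℕ
  | _, [] => 0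
  | σ, c :: w => n4 (mstep σ c) w + (if σ = .A ∧ c = .a then 1 else 0)

def nr : MSt → List AB → ℕ
  | _, [] => 0
  | σ, c :: w => nr (mstep σ c) w +
      (if (σ = .A ∧ c = .b) ∨ (σ = .S ∧ c = .a) then 1 else 0)

def aCnt : List AB → ℕ
  | [] => 0
  | .a :: t => aCnt t + 1
  | .b :: t => aCnt t

lemma runM_X (t : List AB) : runM .X t = .X := by
  induction t with
  | nil => rfl
  | cons c t ih => cases c <;> simpa [runM, mstep] using ih

end Machine

section Rec

lemma sw_nil (w : List AB) : shuffleWord [] w = Finsupp.single w 1 := by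
  rw [shuffleWord]

lemma sw_nil2 (u : List AB) : shuffleWord u [] = Finsupp.single u 1 := by
  cases u <;> rw [shuffleWord]
  simp

lemma sw_cons (x y : AB) (u v : List AB) : shuffleWord (x :: u) (y :: v) =
      Finsupp.mapDomain (List.cons x) (shuffleWord u (y :: v)) +
      Finsupp.mapDomain (List.cons y) (shuffleWord (x :: u) v) := by
  rw [shuffleWord]

lemma md_eq (x : AB) (f : List AB →₀ ℚ) (w : List AB) :
    Finsupp.mapDomain (List.cons x) f (x :: w) = f w := by
  rw [Finsupp.mapDomain_apply (List.cons_injective)]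

lemma md_ne {x z : AB} (h : z ≠ x) (f : List AB →₀ ℚ) (w : List AB) :
    Finsupp.mapDomain (List.cons x) f (z :: w) = 0 := by
  apply Finsupp.mapDomain_notin_range
  rintro ⟨u, hu⟩
  simp at hu
  exact h hu.1.symm

lemma md_nil (x : AB) (f : List AB →₀ ℚ) :
    Finsupp.mapDomain (List.cons x) f [] = 0 := by
  apply Finsupp.mapDomain_notin_range
  rintro ⟨u, hu⟩
  simp at hu

lemma abpow_succ (k : ℕ) : abpow (k + 1) = .a :: .b :: abpow k := by
  simp [abpow, List.replicate_succ]

lemma abpow_zero : abpow 0 = [] := rfl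

-- R lemmas
lemma R_E_a (k l : ℕ) (t : List AB) :
    shuffleWord (abpow k) (abpow l) (.a :: t) =
    (if 1 ≤ k then shuffleWord (.b :: abpow (k-1)) (abpow l) t else 0) +
    (if 1 ≤ l then shuffleWord (abpow k) (.b :: abpow (l-1)) t else 0) := by
  match k, l with
  | 0, 0 => simp [abpow_zero, sw_nil, Finsupp.single_apply]
  | 0, l+1 =>
    simp only [abpow_zero, sw_nil, abpow_succ, Nat.add_sub_cancel]
    simp [Finsupp.single_apply]
  | k+1, 0 =>
    simp only [abpow_zero, sw_nil2, abpow_succ, Nat.add_sub_cancel]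
    simp [Finsupp.single_apply]
  | k+1, l+1 =>
    rw [abpow_succ, abpow_succ, sw_cons]
    simp only [Nat.add_sub_cancel, Finsupp.add_apply, md_eq]
    rw [← abpow_succ, ← abpow_succ]
    simp

lemma R_E_b (k l : ℕ) (t : List AB) :
    shuffleWord (abpow k) (abpow l) (.b :: t) = 0 := by
  match k, l with
  | 0, 0 => simp [abpow_zero, sw_nil, Finsupp.single_apply]
  | 0, l+1 => simp [abpow_zero, sw_nil, abpow_succ, Finsupp.single_apply]
  | k+1, 0 => simp [abpow_zero, sw_nil2, abpow_succ, Finsupp.single_apply]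
  | k+1, l+1 =>
    rw [abpow_succ, abpow_succ, sw_cons]
    simp only [Finsupp.add_apply]
    rw [md_ne (by simp) _ t, md_ne (by simp) _ t]
    simp

lemma R_E_nil (k l : ℕ) :
    shuffleWord (abpow k) (abpow l) [] = if k = 0 ∧ l = 0 then 1 else 0 := by
  match k, l with
  | 0, 0 => simp [abpow_zero, sw_nil]
  | 0, l+1 => simp [abpow_zero, sw_nil, abpow_succ, Finsupp.single_apply]
  | k+1, 0 => simp [abpow_zero, sw_nil2, abpow_succ, Finsupp.single_apply]
  | k+1, l+1 =>
    rw [abpow_succ, abpow_succ, sw_cons]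
    simp [md_nil]

lemma R10_a (k l : ℕ) (t : List AB) :
    shuffleWord (.b :: abpow k) (abpow l) (.a :: t) =
    (if 1 ≤ l then shuffleWord (.b :: abpow k) (.b :: abpow (l-1)) t else 0) := by
  match l with
  | 0 => simp [abpow_zero, sw_nil2, Finsupp.single_apply]
  | l+1 =>
    rw [abpow_succ, sw_cons]
    simp only [Nat.add_sub_cancel, Finsupp.add_apply, md_eq]
    rw [md_ne (by simp) _ t]
    simp

lemma R10_b (k l : ℕ) (t : List AB) :
    shuffleWord (.b :: abpow k) (abpow l) (.b :: t) =
    shuffleWord (abpow k) (abpow l) t := by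
  match l with
  | 0 => simp [abpow_zero, sw_nil2, Finsupp.single_apply, List.cons_eq_cons]
  | l+1 =>
    rw [abpow_succ, sw_cons]
    simp only [Finsupp.add_apply, md_eq]
    rw [md_ne (by simp) _ t, ← abpow_succ]
    simp

lemma R10_nil (k l : ℕ) :
    shuffleWord (.b :: abpow k) (abpow l) [] = 0 := by
  match l with
  | 0 => simp [abpow_zero, sw_nil2, Finsupp.single_apply]
  | l+1 => rw [abpow_succ, sw_cons]; simp [md_nil]

lemma R01_a (k l : ℕ) (t : List AB) :
    shuffleWord (abpow k) (.b :: abpow l) (.a :: t) =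
    (if 1 ≤ k then shuffleWord (.b :: abpow (k-1)) (.b :: abpow l) t else 0) := by
  match k with
  | 0 => simp [abpow_zero, sw_nil, Finsupp.single_apply]
  | k+1 =>
    rw [abpow_succ, sw_cons]
    simp only [Nat.add_sub_cancel, Finsupp.add_apply, md_eq]
    rw [md_ne (by simp) _ t]
    simp

lemma R01_b (k l : ℕ) (t : List AB) :
    shuffleWord (abpow k) (.b :: abpow l) (.b :: t) =
    shuffleWord (abpow k) (abpow l) t := by
  match k with
  | 0 => simp [abpow_zero, sw_nil, Finsupp.single_apply, List.cons_eq_cons]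
  | k+1 =>
    rw [abpow_succ, sw_cons]
    simp only [Finsupp.add_apply, md_eq]
    rw [md_ne (by simp) _ t, ← abpow_succ]
    simp

lemma R01_nil (k l : ℕ) :
    shuffleWord (abpow k) (.b :: abpow l) [] = 0 := by
  match k with
  | 0 => simp [abpow_zero, sw_nil, Finsupp.single_apply]
  | k+1 => rw [abpow_succ, sw_cons]; simp [md_nil]

lemma R11_a (k l : ℕ) (t : List AB) :
    shuffleWord (.b :: abpow k) (.b :: abpow l) (.a :: t) = 0 := by
  rw [sw_cons]
  simp only [Finsupp.add_apply]
  rw [md_ne (by simp) _ t, md_ne (by simp) _ t]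
  simp

lemma R11_b (k l : ℕ) (t : List AB) :
    shuffleWord (.b :: abpow k) (.b :: abpow l) (.b :: t) =
    shuffleWord (abpow k) (.b :: abpow l) t +
    shuffleWord (.b :: abpow k) (abpow l) t := by
  rw [sw_cons]
  simp only [Finsupp.add_apply, md_eq]

lemma R11_nil (k l : ℕ) :
    shuffleWord (.b :: abpow k) (.b :: abpow l) [] = 0 := by
  rw [sw_cons]; simp [md_nil]

end Rec

section Counts

lemma counts_lemma : ∀ (t : List AB) (σ : MSt), runM σ t = .E →
    aCnt t + (if σ = .A then 1 else 0) = 2 * n4 σ t + nr σ t := by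
  intro t
  induction t with
  | nil =>
    intro σ h
    cases σ <;> simp_all [runM, n4, nr, aCnt]
  | cons c t ih =>
    intro σ h
    have h' : runM (mstep σ c) t = .E := h
    have := ih (mstep σ c) h'
    cases σ <;> cases c <;>
      simp_all [mstep, runM, n4, nr, aCnt, runM_X] <;> omega

lemma countAA_cons_a (t : List AB) :
    countAA (.a :: t) = countAA t + (if t.head? = some AB.a then 1 else 0) := by
  cases t with
  | nil => simp [countAA]
  | cons c s => cases c <;> simp [countAA]

lemma headD {t : List AB} (h : runM .D t = .E) : t.head? ≠ some AB.a := by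
  cases t with
  | nil => simp
  | cons c s =>
    cases c
    · exfalso; simp only [runM, mstep, runM_X] at h; exact absurd h (by simp)
    · simp

lemma countAA_lemma : ∀ (t : List AB) (σ : MSt), runM σ t = .E →
    n4 σ t = countAA t + (if σ = .A ∧ t.head? = some .a then 1 else 0) := by
  intro t
  induction t with
  | nil =>
    intro σ h
    cases σ <;> simp_all [runM, n4, countAA]
  | cons c t ih =>
    intro σ h
    have h' : runM (mstep σ c) t = .E := h
    have H := ih (mstep σ c) h'
    cases σ <;> cases c <;>
      simp_all [mstep, runM, n4, countAA, runM_X]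
    · rw [countAA_cons_a]
    · rw [countAA_cons_a, if_neg (by simpa using headD h)]; omega
    · rw [countAA_cons_a, if_neg (by simpa using headD h)]; omega

end Counts

section Forms

noncomputable def eF (w : List AB) (k l : ℕ) : ℚ :=
  if runM .E w = .E ∧ k + l = aCnt w ∧ n4 .E w ≤ k ∧ n4 .E w ≤ l
  then 4 ^ n4 .E w * ((nr .E w).choose (k - n4 .E w)) else 0

noncomputable def aF (w : List AB) (k l : ℕ) : ℚ :=
  if runM .A w = .E ∧ k + l = aCnt w + 1 ∧ n4 .A w ≤ k ∧ n4 .A w ≤ l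
  then 4 ^ n4 .A w * ((nr .A w).choose (k - n4 .A w)) else 0

noncomputable def dF (w : List AB) (k l : ℕ) : ℚ :=
  if runM .D w = .E ∧ k + l = aCnt w ∧ n4 .D w ≤ k ∧ n4 .D w ≤ l
  then 2 * 4 ^ n4 .D w * ((nr .D w).choose (k - n4 .D w)) else 0

noncomputable def sF (w : List AB) (k l : ℕ) : ℚ :=
  if runM .S w = .E ∧ k + l = aCnt w ∧ n4 .S w ≤ k ∧ n4 .S w ≤ l
  then 2 * 4 ^ n4 .S w * ((nr .S w).choose (k - n4 .S w)) else 0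

lemma binom_split (c : ℚ) (n r T k l : ℕ) (hT : T = 2*n + r) :
    (if 1 ≤ l then (if k + (l-1) = T ∧ n ≤ k ∧ n ≤ l-1 then c * (r.choose (k-n)) else 0) else 0)
  + (if 1 ≤ k then (if (k-1) + l = T ∧ n ≤ k-1 ∧ n ≤ l then c * (r.choose (k-1-n)) else 0) else 0)
  = (if k + l = T + 1 ∧ n ≤ k ∧ n ≤ l then c * ((r+1).choose (k-n)) else 0) := by
  by_cases H : k + l = T + 1 ∧ n ≤ k ∧ n ≤ l
  · obtain ⟨h1, h2, h3⟩ := H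
    have hR : (if k + l = T + 1 ∧ n ≤ k ∧ n ≤ l then c * ((r+1).choose (k-n)) else 0)
        = c * ((r+1).choose (k-n)) := if_pos ⟨h1, h2, h3⟩
    rw [hR]
    rcases Nat.eq_or_lt_of_le h2 with he | hk
    · -- k = n
      have hl1 : 1 ≤ l := by omega
      have e1 : (if 1 ≤ l then (if k + (l-1) = T ∧ n ≤ k ∧ n ≤ l-1 then c * (r.choose (k-n)) else 0) else 0)
          = c * (r.choose (k-n)) := by
        rw [if_pos hl1]; exact if_pos ⟨by omega, h2, by omega⟩
      have e2 : (if 1 ≤ k then (if (k-1) + l = T ∧ n ≤ k-1 ∧ n ≤ l then c * (r.choose (k-1-n)) else 0) else 0) = 0 := by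
        split_ifs with u1 u2
        · exfalso; omega
        · rfl
        · rfl
      rw [e1, e2, ← he, Nat.sub_self]
      simp
    · -- n < k
      have hk1 : 1 ≤ k := by omega
      have e2 : (if 1 ≤ k then (if (k-1) + l = T ∧ n ≤ k-1 ∧ n ≤ l then c * (r.choose (k-1-n)) else 0) else 0)
          = c * (r.choose (k-1-n)) := by
        rw [if_pos hk1]; exact if_pos ⟨by omega, by omega, h3⟩
      rw [e2]
      have e1 : k - n = (k - 1 - n) + 1 := by omega
      by_cases hl : 1 ≤ l ∧ n ≤ l - 1
      · have e3 : (if 1 ≤ l then (if k + (l-1) = T ∧ n ≤ k ∧ n ≤ l-1 then c * (r.choose (k-n)) else 0) else 0)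
            = c * (r.choose (k-n)) := by
          rw [if_pos hl.1]; exact if_pos ⟨by omega, h2, hl.2⟩
        rw [e3, e1, Nat.choose_succ_succ]
        push_cast
        ring
      · have e3 : (if 1 ≤ l then (if k + (l-1) = T ∧ n ≤ k ∧ n ≤ l-1 then c * (r.choose (k-n)) else 0) else 0) = 0 := by
          split_ifs with u1 u2
          · exfalso; omega
          · rfl
          · rfl
        have hcz : (r+1).choose (k - n) = r.choose (k-1-n) := by
          have hkn : k - n = r + 1 := by omega
          have hkn' : k - 1 - n = r := by omega
          rw [hkn, hkn', Nat.choose_succ_succ, Nat.choose_succ_self]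
          simp
        rw [e3, hcz]
        ring
  · rw [if_neg H]
    have t1 : (if 1 ≤ l then (if k + (l-1) = T ∧ n ≤ k ∧ n ≤ l-1 then c * (r.choose (k-n)) else 0) else 0) = 0 := by
      split_ifs with hh1 hh2
      · exfalso; exact H ⟨by omega, by omega, by omega⟩
      · rfl
      · rfl
    have t2 : (if 1 ≤ k then (if (k-1) + l = T ∧ n ≤ k-1 ∧ n ≤ l then c * (r.choose (k-1-n)) else 0) else 0) = 0 := by
      split_ifs with hh1 hh2
      · exfalso; exact H ⟨by omega, by omega, by omega⟩
      · rfl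
      · rfl
    rw [t1, t2]; ring

end Forms

section Master

lemma master (w : List AB) :
    (∀ k l, shuffleWord (abpow k) (abpow l) w = eF w k l) ∧
    (∀ k l, shuffleWord (.b :: abpow k) (abpow l) w
        + shuffleWord (abpow k) (.b :: abpow l) w = sF w k l) ∧
    (∀ k l, shuffleWord (.b :: abpow k) (.b :: abpow l) w = dF w k l) ∧
    (∀ k l, (if 1 ≤ k then shuffleWord (.b :: abpow (k-1)) (abpow l) w else 0)
        + (if 1 ≤ l then shuffleWord (abpow k) (.b :: abpow (l-1)) w else 0) = aF w k l) := by
  induction w with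
  | nil =>
    refine ⟨?_, ?_, ?_, ?_⟩
    · intro k l
      rw [R_E_nil]
      by_cases h : k = 0 ∧ l = 0
      · obtain ⟨rfl, rfl⟩ := h
        simp [eF, runM, n4, nr, aCnt]
      · rw [if_neg h, eF, if_neg (by rintro ⟨-, h2, -⟩; simp [aCnt] at h2; exact h (by omega))]
    · intro k l
      simp [R10_nil, R01_nil, sF, runM]
    · intro k l
      simp [R11_nil, dF, runM]
    · intro k l
      simp [R10_nil, R01_nil, aF, runM]
  | cons c t ih =>
    obtain ⟨ihE, ihS, ihD, ihA⟩ := ih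
    cases c
    · -- c = a
      refine ⟨?_, ?_, ?_, ?_⟩
      · intro k l
        rw [R_E_a, ihA k l]
        have : eF (.a :: t) k l = aF t k l := by
          simp [eF, aF, runM, mstep, n4, nr, aCnt]
        rw [this]
      · intro k l
        rw [R10_a, R01_a]
        simp only [ihD]
        by_cases hacc : runM .D t = .E
        · have hT : aCnt t = 2 * n4 MSt.D t + nr MSt.D t := by
            have := counts_lemma t .D hacc; simpa using this
          have ed : ∀ k' l', dF t k' l' =
              if k' + l' = aCnt t ∧ n4 MSt.D t ≤ k' ∧ n4 MSt.D t ≤ l'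
              then (2 * 4 ^ n4 MSt.D t * ((nr MSt.D t).choose (k' - n4 MSt.D t)) : ℚ) else 0 := by
            intro k' l'; simp [dF, hacc]
          have es : sF (.a :: t) k l =
              if k + l = aCnt t + 1 ∧ n4 MSt.D t ≤ k ∧ n4 MSt.D t ≤ l
              then (2 * 4 ^ n4 MSt.D t * ((nr MSt.D t + 1).choose (k - n4 MSt.D t)) : ℚ) else 0 := by
            simp [sF, runM, mstep, n4, nr, aCnt, hacc]
          rw [es]
          simp only [ed]
          exact binom_split (2 * 4 ^ n4 MSt.D t) (n4 MSt.D t) (nr MSt.D t) (aCnt t) k l hT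
        · simp [dF, sF, runM, mstep, hacc]
      · intro k l
        rw [R11_a, dF, if_neg (by rintro ⟨h1, -⟩; rw [show runM .D (.a :: t) = runM .X t from rfl, runM_X] at h1; simp at h1)]
      · intro k l
        simp only [R10_a, R01_a, ihD]
        by_cases hacc : runM .D t = .E
        · have ed : ∀ k' l', dF t k' l' =
              if k' + l' = aCnt t ∧ n4 MSt.D t ≤ k' ∧ n4 MSt.D t ≤ l'
              then (2 * 4 ^ n4 MSt.D t * ((nr MSt.D t).choose (k' - n4 MSt.D t)) : ℚ) else 0 := by
            intro k' l'; simp [dF, hacc]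
          have ea : aF (.a :: t) k l =
              if k + l = aCnt t + 2 ∧ n4 MSt.D t + 1 ≤ k ∧ n4 MSt.D t + 1 ≤ l
              then (4 ^ (n4 MSt.D t + 1) * ((nr MSt.D t).choose (k - (n4 MSt.D t + 1))) : ℚ) else 0 := by
            simp [aF, runM, mstep, n4, nr, aCnt, hacc]
          rw [ea]
          simp only [ed]
          by_cases hk : 1 ≤ k
          · by_cases hl : 1 ≤ l
            · simp only [if_pos hk, if_pos hl]
              by_cases hc : (k-1) + (l-1) = aCnt t ∧ n4 MSt.D t ≤ k-1 ∧ n4 MSt.D t ≤ l-1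
              · have hc' := hc
                obtain ⟨u1, u2, u3⟩ := hc'
                rw [if_pos hc, if_pos (show k + l = aCnt t + 2 ∧ n4 MSt.D t + 1 ≤ k ∧ n4 MSt.D t + 1 ≤ l from ⟨by omega, by omega, by omega⟩)]
                have hsub : k - 1 - n4 MSt.D t = k - (n4 MSt.D t + 1) := by omega
                rw [hsub, pow_succ]
                ring
              · rw [if_neg hc, if_neg (fun hcc => hc ⟨by omega, by omega, by omega⟩)]
                ring
            · simp only [if_neg hl, if_pos hk, ite_self]
              rw [if_neg (fun hcc => hl (by omega))]
              ring
          · simp only [if_neg hk, ite_self]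
            rw [if_neg (fun hcc => hk (by omega))]
            ring
        · simp [dF, aF, runM, mstep, hacc]
    · -- c = b
      refine ⟨?_, ?_, ?_, ?_⟩
      · intro k l
        rw [R_E_b, eF, if_neg (by rintro ⟨h1, -⟩; rw [show runM .E (.b :: t) = runM .X t from rfl, runM_X] at h1; simp at h1)]
      · intro k l
        rw [R10_b, R01_b]
        simp only [ihE]
        simp only [eF, sF]
        have h1 : runM .S (.b :: t) = runM .E t := rfl
        have h2 : n4 .S (.b :: t) = n4 .E t := by simp [n4, mstep]
        have h3 : nr .S (.b :: t) = nr .E t := by simp [nr, mstep]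
        have h4 : aCnt (.b :: t) = aCnt t := by simp [aCnt]
        rw [h1, h2, h3, h4]
        split_ifs <;> ring
      · intro k l
        rw [R11_b, add_comm, ihS k l]
        have : dF (.b :: t) k l = sF t k l := by
          simp [dF, sF, runM, mstep, n4, nr, aCnt]
        rw [this]
      · intro k l
        simp only [R10_b, R01_b, ihE]
        by_cases hacc : runM .E t = .E
        · have hT : aCnt t = 2 * n4 MSt.E t + nr MSt.E t := by
            have := counts_lemma t .E hacc; simpa using this
          have ee : ∀ k' l', eF t k' l' =
              if k' + l' = aCnt t ∧ n4 MSt.E t ≤ k' ∧ n4 MSt.E t ≤ l'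
              then (4 ^ n4 MSt.E t * ((nr MSt.E t).choose (k' - n4 MSt.E t)) : ℚ) else 0 := by
            intro k' l'; simp [eF, hacc]
          have ea : aF (.b :: t) k l =
              if k + l = aCnt t + 1 ∧ n4 MSt.E t ≤ k ∧ n4 MSt.E t ≤ l
              then (4 ^ n4 MSt.E t * ((nr MSt.E t + 1).choose (k - n4 MSt.E t)) : ℚ) else 0 := by
            simp [aF, runM, mstep, n4, nr, aCnt, hacc]
          rw [ea]
          simp only [ee]
          rw [add_comm]
          exact binom_split (4 ^ n4 MSt.E t) (n4 MSt.E t) (nr MSt.E t) (aCnt t) k l hT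
        · simp [eF, aF, runM, mstep, hacc]

end Master

section Assemble

lemma T_apply (m n : ℕ) (hn : 2*n ≤ m) (w : List AB) :
    T m n w = if runM .E w = .E ∧ aCnt w = m ∧ n4 .E w = n then 1 else 0 := by
  have hnm : n ≤ m := by omega
  rw [T, if_pos hnm, Finsupp.finset_sum_apply]
  simp only [Finsupp.single_apply]
  rw [Finset.sum_ite_eq' _ w (fun _ => (1:ℚ))]
  congr 1
  rw [Finset.mem_filter, Finsupp.mem_support_iff, (master w).1 n (m-n)]
  simp only [eq_iff_iff]
  constructor
  · rintro ⟨h1, h2⟩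
    rw [eF] at h1
    split_ifs at h1 with hc
    · obtain ⟨hr, hsum, hk, hl⟩ := hc
      have hAA := countAA_lemma w .E hr
      simp at hAA
      refine ⟨hr, by omega, by omega⟩
    · exact absurd rfl h1
  · rintro ⟨hr, ham, hnn⟩
    have hAA := countAA_lemma w .E hr
    simp at hAA
    have hC := counts_lemma w .E hr
    simp at hC
    constructor
    · rw [eF, if_pos ⟨hr, by omega, by omega, by omega⟩]
      have : n - n4 MSt.E w = 0 := by omega
      rw [this]
      simp
    · omega

lemma polyMul_monomial (d : Fin 2 →₀ ℕ) (c : ℚ) (s : List AB →₀ ℚ) :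
    polyMul (MvPolynomial.monomial d c) s = Finsupp.single (d 0, d 1) (c • s) := by
  unfold polyMul
  rw [MvPolynomial.sum_monomial_eq]
  simp

lemma polyMul_zero (s : List AB →₀ ℚ) : polyMul 0 s = 0 := by
  unfold polyMul
  exact Finsupp.sum_zero_index

lemma polyMul_add (p q : MvPolynomial (Fin 2) ℚ) (s : List AB →₀ ℚ) :
    polyMul (p + q) s = polyMul p s + polyMul q s := by
  unfold polyMul
  apply Finsupp.sum_add_index'
  · intro d; simp
  · intro d c1 c2; rw [add_smul, Finsupp.single_add]

lemma polyMul_sum {ι : Type*} (s : Finset ι) (p : ι → MvPolynomial (Fin 2) ℚ)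
    (q : List AB →₀ ℚ) : polyMul (∑ i ∈ s, p i) q = ∑ i ∈ s, polyMul (p i) q := by
  classical
  induction s using Finset.induction_on with
  | empty => simp [polyMul_zero]
  | insert _ _ h ih =>
    rw [Finset.sum_insert h, polyMul_add, ih, Finset.sum_insert h]

end Assemble

section Final

open MvPolynomial

lemma lhs_poly (k j : ℕ) : (X 0 : MvPolynomial (Fin 2) ℚ) ^ k * X 1 ^ j
    = monomial (Finsupp.single 0 k + Finsupp.single 1 j) 1 := by
  rw [X_pow_eq_monomial, X_pow_eq_monomial, monomial_mul, mul_one]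

lemma rhs_poly (n N : ℕ) : (C (4:ℚ) * X 0 * X 1 : MvPolynomial (Fin 2) ℚ) ^ n * (X 0 + X 1) ^ N
    = ∑ t ∈ Finset.range (N+1),
        monomial (Finsupp.single 0 (n+t) + Finsupp.single 1 (n + (N - t)))
          ((4:ℚ)^n * (N.choose t)) := by
  rw [add_pow, Finset.mul_sum]
  refine Finset.sum_congr rfl fun t ht => ?_
  have h1 : (C (4:ℚ) * X 0 * X 1 : MvPolynomial (Fin 2) ℚ)
      = monomial (Finsupp.single 0 1 + Finsupp.single 1 1) 4 := by
    rw [C_apply, X, X, monomial_mul, monomial_mul]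
    simp
  have h2 : ((N.choose t : ℕ) : MvPolynomial (Fin 2) ℚ) = C ((N.choose t : ℕ) : ℚ) := by
    simp
  have he : (n • (Finsupp.single (0:Fin 2) 1 + Finsupp.single (1:Fin 2) 1))
      + (Finsupp.single (0:Fin 2) t + Finsupp.single (1:Fin 2) (N - t))
      = Finsupp.single (0:Fin 2) (n+t) + Finsupp.single (1:Fin 2) (n + (N-t)) := by
    ext i
    fin_cases i <;> simp [Finsupp.single_apply]
  rw [h1, monomial_pow, lhs_poly, h2, mul_comm _ (C ((N.choose t : ℕ) : ℚ)), ← mul_assoc,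
    mul_comm _ (C ((N.choose t : ℕ) : ℚ)), C_mul_monomial, monomial_mul, he]
  congr 1
  ring

lemma single01_apply (u v : ℕ) : ((Finsupp.single (0 : Fin 2) u + Finsupp.single (1 : Fin 2) v) 0 = u)
    ∧ ((Finsupp.single (0 : Fin 2) u + Finsupp.single (1 : Fin 2) v) 1 = v) := by
  constructor <;> simp [Finsupp.single_apply]

end Final

open MvPolynomial in
/-- **Theorem (generating-function form of the shuffle convolution, `T` case).**
Let `x` and `y` be commuting indeterminates.  In the commutative polynomial
ring `(Sh_ℚ[{a,b}])[x,y]`, for every non-negative integer `m`,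
`Σ_{k=0}^m x^k y^{m-k} [(ab)^k ⧢ (ab)^{m-k}]
  = Σ_{n=0}^{⌊m/2⌋} (4xy)^n (x+y)^{m-2n} T_{m,n}`. -/
theorem genfun_shuffle_T (m : ℕ) :
    (∑ k ∈ Finset.range (m + 1),
      polyMul ((X 0 : MvPolynomial (Fin 2) ℚ) ^ k * X 1 ^ (m - k))
        (shuffleWord (abpow k) (abpow (m - k)))) =
    ∑ n ∈ Finset.range (m / 2 + 1),
      polyMul ((C 4 * X 0 * X 1) ^ n * (X 0 + X 1) ^ (m - 2 * n)) (T m n) := by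
  have L : ∀ k, polyMul ((X 0 : MvPolynomial (Fin 2) ℚ) ^ k * X 1 ^ (m - k))
        (shuffleWord (abpow k) (abpow (m - k)))
      = Finsupp.single (k, m-k) (shuffleWord (abpow k) (abpow (m-k))) := by
    intro k
    rw [lhs_poly, polyMul_monomial, one_smul]
    congr 1
    exact Prod.ext (single01_apply _ _).1 (single01_apply _ _).2
  have Rn : ∀ n, polyMul ((C 4 * X 0 * X 1 : MvPolynomial (Fin 2) ℚ) ^ n
        * (X 0 + X 1) ^ (m - 2*n)) (T m n)
      = ∑ t ∈ Finset.range (m - 2*n + 1),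
          Finsupp.single (n + t, n + (m - 2*n - t))
            (((4:ℚ)^n * (((m-2*n).choose t) : ℚ)) • T m n) := by
    intro n
    rw [rhs_poly, polyMul_sum]
    refine Finset.sum_congr rfl fun t ht => ?_
    rw [polyMul_monomial]
    congr 1
    exact Prod.ext (single01_apply _ _).1 (single01_apply _ _).2
  simp only [L, Rn]
  apply Finsupp.ext
  rintro ⟨i, j⟩
  apply Finsupp.ext
  intro w
  simp only [Finsupp.finset_sum_apply, Finsupp.single_apply,
    apply_ite (fun f : List AB →₀ ℚ => f w), Finsupp.coe_zero, Pi.zero_apply,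
    Finsupp.smul_apply, smul_eq_mul]
  by_cases hm : i + j = m
  · have hL : (∑ k ∈ Finset.range (m + 1),
        if (k, m - k) = (i, j) then (shuffleWord (abpow k) (abpow (m - k))) w else 0)
        = shuffleWord (abpow i) (abpow j) w := by
      rw [Finset.sum_eq_single i]
      · have hji : m - i = j := by omega
        rw [hji, if_pos rfl]
      · intro k hk hki
        rw [if_neg]
        rintro h
        rw [Prod.mk.injEq] at h
        exact hki h.1
      · intro hi
        exact absurd (Finset.mem_range.mpr (by omega)) hi
    rw [hL, (master w).1 i j]
    rw [Finset.sum_congr rfl (fun n hn => Finset.sum_congr rfl (fun t ht => by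
      rw [T_apply m n (by have := Finset.mem_range.1 hn; omega) w]))]
    by_cases hacc : runM .E w = .E ∧ aCnt w = m
    · obtain ⟨hr, ham⟩ := hacc
      have hC := counts_lemma w .E hr
      simp at hC
      rw [Finset.sum_eq_single (n4 MSt.E w)]
      · by_cases hij : n4 MSt.E w ≤ i ∧ n4 MSt.E w ≤ j
        · rw [Finset.sum_eq_single (i - n4 MSt.E w)]
          · rw [if_pos (by rw [Prod.mk.injEq]; exact ⟨by omega, by omega⟩),
              if_pos ⟨hr, ham, rfl⟩, mul_one, eF, if_pos ⟨hr, by omega, hij.1, hij.2⟩]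
            have hnr : nr MSt.E w = m - 2 * n4 MSt.E w := by omega
            rw [hnr]
          · intro t ht hne
            rw [if_neg]
            rintro h
            rw [Prod.mk.injEq] at h
            exact hne (by omega)
          · intro hnotin
            exact absurd (Finset.mem_range.mpr (by omega)) hnotin
        · rw [eF, if_neg (by rintro ⟨-, -, h3, h4⟩; exact hij ⟨h3, h4⟩)]
          rw [Finset.sum_eq_zero]
          intro t ht
          rw [if_neg]
          rintro h
          rw [Prod.mk.injEq] at h
          exact hij ⟨by omega, by omega⟩
      · intro n hn hne
        rw [Finset.sum_eq_zero]
        intro t ht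
        have hz : (if runM MSt.E w = MSt.E ∧ aCnt w = m ∧ n4 MSt.E w = n then (1:ℚ) else 0) = 0 :=
          if_neg (by rintro ⟨-, -, hh⟩; exact hne hh.symm)
        rw [hz, mul_zero, ite_self]
      · intro hnot
        exact absurd (Finset.mem_range.mpr (by omega)) hnot
    · rw [eF, if_neg (by rintro ⟨h1, h2, -⟩; exact hacc ⟨h1, by omega⟩)]
      rw [Finset.sum_eq_zero]
      intro n hn
      rw [Finset.sum_eq_zero]
      intro t ht
      have hz : (if runM MSt.E w = MSt.E ∧ aCnt w = m ∧ n4 MSt.E w = n then (1:ℚ) else 0) = 0 :=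
        if_neg (by rintro ⟨u1, u2, -⟩; exact hacc ⟨u1, u2⟩)
      rw [hz, mul_zero, ite_self]
  · rw [Finset.sum_eq_zero, Finset.sum_eq_zero]
    · intro n hn
      rw [Finset.sum_eq_zero]
      intro t ht
      rw [if_neg]
      rintro h
      rw [Prod.mk.injEq] at h
      have h1 := Finset.mem_range.1 hn
      have h2 := Finset.mem_range.1 ht
      omega
    · intro k hk
      rw [if_neg]
      rintro h
      rw [Prod.mk.injEq] at h
      have := Finset.mem_range.1 hk
      omega
end
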